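/- Let E be a Mauldin–Williams fractal with cylinders J_σ (σ admissible words), satisfying the strong separation condition d(J_{σ*j_1}, J_{σ*j_2}) ≥ t·max(|J_{σ*j_1}|, |J_{σ*j_2}|) for a fixed t ∈ (0,1), with |J_σ| = c_σ and ratios c_{ij} ∈ [c̲, c̄] ⊂ (0,1). Let μ be the Markov-type measure with μ(J_σ) = q_{σ_1} p_σ and p̄ := max p_{ij} < 1. For σ ≠ θ, let ν_σ := μ(·|J_σ) ∘ f_σ, the pull-back of the conditional measure under a similitude f_σ of ratio c_σ. Then there exist constants A_3, A_4 > 0 such that sup_{σ} sup_{x∈ℝ^q} ν_σ(B(x,ε)) ≤ A_3 ε^{A_4} for all ε > 0; one may take A_4 = log p̄ / log c̲. -/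

import Mathlib

open MeasureTheory Finset

/-- Product of transition weights along a word (list of letters). -/
def pword {N : ℕ} (P : Matrix (Fin N) (Fin N) ℝ) (l : List (Fin N)) : ℝ :=
  ((l.zip l.tail).map fun ab => P ab.1 ab.2).prod

/-- Admissible word: nonempty with positive transition weights. -/
def adm {N : ℕ} (P : Matrix (Fin N) (Fin N) ℝ) (l : List (Fin N)) : Prop :=
  l ≠ [] ∧ l.Chain' fun a b => 0 < P a b

/-!
Strong separation puts distinct children of `J σ` at distance at least `t c̲ c_σ` from each
other, so a ball of radius `r` with `2 r < t c̲ c_σ` meets at most one of them, while the Markov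
measure of `J σ` is carried by its children. Following the ball down the tree until the first
cylinder `J τ` with `t c̲ c_τ ≤ 2 r`, every step multiplies the measure by some `p_ij ≤ c_ij ^ s`,
where `s = log p̄ / log c̲`; hence `μ (B(y, r) ∩ J σ) ≤ μ (J σ) (2 r / (t c̲ c_σ)) ^ s`. Pulling
back by the similitude `f σ` turns a ball of radius `ε` into one of radius `c_σ ε`, which gives
the bound with `A₃ = (2 / (t c̲)) ^ s`.
-/

open Metric

section Words

variable {N : ℕ}

lemma pword_cons_cons (P : Matrix (Fin N) (Fin N) ℝ) (a b : Fin N) (l : List (Fin N)) :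
    pword P (a :: b :: l) = P a b * pword P (b :: l) := rfl

lemma pword_pos {P Q : Matrix (Fin N) (Fin N) ℝ} (hPQ : ∀ i j, 0 < P i j → 0 < Q i j)
    {l : List (Fin N)} (hl : adm P l) : 0 < pword Q l := by
  replace hl : l.IsChain fun a b => 0 < P a b := hl.2
  induction l with
  | nil => exact one_pos
  | cons a l ih =>
    cases l with
    | nil => exact one_pos
    | cons b l =>
      rw [List.isChain_cons_cons] at hl
      exact pword_cons_cons Q a b l ▸ mul_pos (hPQ _ _ hl.1) (ih hl.2)

lemma pword_append_singleton (P : Matrix (Fin N) (Fin N) ℝ) {l : List (Fin N)} (hl : l ≠ [])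
    (j : Fin N) : pword P (l ++ [j]) = pword P l * P (l.getLast hl) j := by
  induction l with
  | nil => exact absurd rfl hl
  | cons a l ih =>
    cases l with
    | nil => simp [pword]
    | cons b l =>
      rw [List.cons_append, List.cons_append, pword_cons_cons, ← List.cons_append,
        ih (List.cons_ne_nil b l), pword_cons_cons, List.getLast_cons (List.cons_ne_nil b l)]
      ring

lemma adm_append_singleton_iff (P : Matrix (Fin N) (Fin N) ℝ) {l : List (Fin N)} (hl : l ≠ [])
    (j : Fin N) : adm P (l ++ [j]) ↔ adm P l ∧ 0 < P (l.getLast hl) j := by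
  change (_ ∧ List.IsChain _ _) ↔ (_ ∧ List.IsChain _ _) ∧ _
  simp [List.isChain_append, List.getLast?_eq_some_getLast hl, hl]

lemma map_append_singleton_headI {α : Type*} (q : Fin N → α) [Inhabited α] {l : List (Fin N)}
    (hl : l ≠ []) (j : Fin N) : ((l ++ [j]).map q).headI = (l.map q).headI := by
  cases l with
  | nil => exact absurd rfl hl
  | cons a l => rfl

open scoped Classical in
noncomputable def children (P : Matrix (Fin N) (Fin N) ℝ) (σ : List (Fin N)) : Finset (Fin N) :=
  univ.filter fun j => adm P (σ ++ [j])

lemma mem_children {P : Matrix (Fin N) (Fin N) ℝ} {σ : List (Fin N)} {j : Fin N} :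
    j ∈ children P σ ↔ adm P (σ ++ [j]) := by
  simp [children]

lemma sum_children {P : Matrix (Fin N) (Fin N) ℝ} (hnn : ∀ i j, 0 ≤ P i j)
    (hrow : ∀ i, ∑ j, P i j = 1) {σ : List (Fin N)} (hσ : adm P σ) :
    ∑ j ∈ children P σ, P (σ.getLast hσ.1) j = 1 := by
  rw [← hrow (σ.getLast hσ.1)]
  refine Finset.sum_subset (subset_univ _) fun j _ hj => ?_
  rw [mem_children, adm_append_singleton_iff P hσ.1, not_and] at hj
  exact (hnn _ j).antisymm' (not_lt.mp (hj hσ))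

end Words

lemma measure_append_singleton_eq {X : Type*} [MeasurableSpace X] {μ : Measure X} {N : ℕ}
    {P : Matrix (Fin N) (Fin N) ℝ} {J : List (Fin N) → Set X} (q : Fin N → ℝ)
    (hnn : ∀ i j, 0 ≤ P i j)
    (hμ : ∀ σ, adm P σ → μ (J σ) = ENNReal.ofReal ((σ.map q).headI * pword P σ))
    {σ : List (Fin N)} (hσ : σ ≠ []) {j : Fin N} (hσj : adm P (σ ++ [j])) :
    μ (J (σ ++ [j])) = ENNReal.ofReal (P (σ.getLast hσ) j) * μ (J σ) := by
  rw [hμ _ hσj, hμ _ ((adm_append_singleton_iff P hσ j).mp hσj).1,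
    map_append_singleton_headI q hσ, pword_append_singleton P hσ, ← mul_assoc, mul_comm,
    ENNReal.ofReal_mul (hnn _ _)]

lemma mul_div_rpow_le {p c ρ s : ℝ} (hc : 0 < c) (hρ : 0 ≤ ρ) (hp : p ≤ c ^ s) :
    p * (ρ / c) ^ s ≤ ρ ^ s := by
  rw [Real.div_rpow hρ hc.le]
  calc p * (ρ ^ s / c ^ s) ≤ c ^ s * (ρ ^ s / c ^ s) :=
        mul_le_mul_of_nonneg_right hp (by positivity)
    _ = ρ ^ s := mul_div_cancel₀ _ (Real.rpow_pos_of_pos hc s).ne'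

lemma ENNReal.inv_mul_mul_le_of_ne_top {a : ENNReal} (ha : a ≠ ⊤) (b : ENNReal) :
    a⁻¹ * (a * b) ≤ b := by
  rcases eq_or_ne a 0 with rfl | ha₀
  · simp
  · rw [← mul_assoc, ENNReal.inv_mul_cancel ha₀ ha, one_mul]

lemma comap_closedBall_le {X Y : Type*} [PseudoMetricSpace X] [MeasurableSpace X]
    [OpensMeasurableSpace X] [PseudoMetricSpace Y] [MeasurableSpace Y] {f : X → Y} {l : ℝ}
    (hl : 0 ≤ l) (hf : ∀ x y, dist (f x) (f y) = l * dist x y) (ν : Measure Y) (x : X)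
    (ε : ℝ) : Measure.comap f ν (closedBall x ε) ≤ ν (closedBall (f x) (l * ε)) := by
  by_cases hcomap : Function.Injective f ∧
      ∀ s, MeasurableSet s → NullMeasurableSet (f '' s) ν
  · rw [Measure.comap_apply₀ f ν hcomap.1 hcomap.2 measurableSet_closedBall.nullMeasurableSet]
    refine measure_mono ?_
    rintro _ ⟨z, hz, rfl⟩
    rw [mem_closedBall, hf]
    exact mul_le_mul_of_nonneg_left (mem_closedBall.mp hz) hl
  · rw [Measure.comap, dif_neg hcomap]
    exact zero_le

structure IsMarkovCylinderSystem {X : Type*} [PseudoMetricSpace X] [MeasurableSpace X] {N : ℕ}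
    (P c : Matrix (Fin N) (Fin N) ℝ) (t : ℝ) (J : List (Fin N) → Set X) (μ : Measure X) :
    Prop where
  nonneg : ∀ i j, 0 ≤ P i j
  sum_row : ∀ i, ∑ j, P i j = 1
  ratio_pos : ∀ i j, 0 < P i j → 0 < c i j
  sep_pos : 0 < t
  measurableSet : ∀ σ, adm P σ → MeasurableSet (J σ)
  diam_eq : ∀ σ, adm P σ → diam (J σ) = pword c σ
  subset : ∀ σ (i : Fin N), adm P σ → adm P (σ ++ [i]) → J (σ ++ [i]) ⊆ J σ
  separated : ∀ σ (j₁ j₂ : Fin N), adm P (σ ++ [j₁]) → adm P (σ ++ [j₂]) → j₁ ≠ j₂ →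
    ∀ x ∈ J (σ ++ [j₁]), ∀ y ∈ J (σ ++ [j₂]),
      t * max (diam (J (σ ++ [j₁]))) (diam (J (σ ++ [j₂]))) ≤ dist x y
  measure_append : ∀ σ (hσ : σ ≠ []) j, adm P (σ ++ [j]) →
    μ (J (σ ++ [j])) = ENNReal.ofReal (P (σ.getLast hσ) j) * μ (J σ)

namespace IsMarkovCylinderSystem

variable {X : Type*} [PseudoMetricSpace X] [MeasurableSpace X] {N : ℕ}
  {P c : Matrix (Fin N) (Fin N) ℝ} {t : ℝ} {J : List (Fin N) → Set X} {μ : Measure X}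
  {σ : List (Fin N)}

lemma pairwiseDisjoint_children (hJ : IsMarkovCylinderSystem P c t J μ) :
    (children P σ : Set (Fin N)).PairwiseDisjoint fun j => J (σ ++ [j]) := by
  intro j₁ h₁ j₂ h₂ hne
  rw [Function.onFun, Set.disjoint_left]
  intro x hx₁ hx₂
  have h₁ : adm P (σ ++ [j₁]) := mem_children.mp h₁
  have hpos : 0 < t * diam (J (σ ++ [j₁])) :=
    mul_pos hJ.sep_pos (hJ.diam_eq _ h₁ ▸ pword_pos hJ.ratio_pos h₁)
  have := hJ.separated σ j₁ j₂ h₁ (mem_children.mp h₂) hne x hx₁ x hx₂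
  rw [dist_self] at this
  nlinarith [mul_le_mul_of_nonneg_left (le_max_left (diam (J (σ ++ [j₁])))
    (diam (J (σ ++ [j₂])))) hJ.sep_pos.le]

lemma measure_biUnion_children (hJ : IsMarkovCylinderSystem P c t J μ) (hσ : adm P σ) :
    μ (⋃ j ∈ children P σ, J (σ ++ [j])) = μ (J σ) := by
  rw [measure_biUnion_finset hJ.pairwiseDisjoint_children
      fun j hj => hJ.measurableSet _ (mem_children.mp hj),
    Finset.sum_congr rfl fun j hj => hJ.measure_append σ hσ.1 j (mem_children.mp hj),
    ← Finset.sum_mul, ← ENNReal.ofReal_sum_of_nonneg fun j _ => hJ.nonneg _ j,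
    sum_children hJ.nonneg hJ.sum_row hσ, ENNReal.ofReal_one, one_mul]

lemma measure_inter_le_sum_children [IsFiniteMeasure μ] (hJ : IsMarkovCylinderSystem P c t J μ)
    (hσ : adm P σ) (B : Set X) :
    μ (B ∩ J σ) ≤ ∑ j ∈ children P σ, μ (B ∩ J (σ ++ [j])) := by
  set U := ⋃ j ∈ children P σ, J (σ ++ [j])
  have hU : MeasurableSet U :=
    (children P σ).measurableSet_biUnion fun j hj => hJ.measurableSet _ (mem_children.mp hj)
  have hnull : μ (J σ \ U) = 0 := by
    rw [measure_sdiff (Set.iUnion₂_subset fun j hj => hJ.subset σ j hσ (mem_children.mp hj))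
      hU.nullMeasurableSet (measure_ne_top μ U), hJ.measure_biUnion_children hσ, tsub_self]
  calc μ (B ∩ J σ) ≤ μ (⋃ j ∈ children P σ, B ∩ J (σ ++ [j])) := by
        rw [← Set.inter_iUnion₂]
        refine measure_mono_ae (ae_le_set.mpr (measure_mono_null ?_ hnull))
        exact fun x hx => ⟨hx.1.2, fun hxU => hx.2 ⟨hx.1.1, hxU⟩⟩
    _ ≤ _ := measure_biUnion_finset_le _ _

lemma le_dist_of_mem_children (hJ : IsMarkovCylinderSystem P c t J μ) {κ : ℝ}
    (hκ : ∀ i j, 0 < P i j → κ ≤ c i j) (hσ : adm P σ) {j₁ j₂ : Fin N}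
    (h₁ : adm P (σ ++ [j₁])) (h₂ : adm P (σ ++ [j₂])) (hne : j₁ ≠ j₂) {x y : X}
    (hx : x ∈ J (σ ++ [j₁])) (hy : y ∈ J (σ ++ [j₂])) : t * κ * pword c σ ≤ dist x y := by
  have hdiam : κ * pword c σ ≤ diam (J (σ ++ [j₂])) := by
    rw [hJ.diam_eq _ h₂, pword_append_singleton c hσ.1, mul_comm κ]
    exact mul_le_mul_of_nonneg_left (hκ _ _ ((adm_append_singleton_iff P hσ.1 j₂).mp h₂).2)
      (pword_pos hJ.ratio_pos hσ).le
  calc t * κ * pword c σ ≤ t * max (diam (J (σ ++ [j₁]))) (diam (J (σ ++ [j₂]))) := by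
        rw [mul_assoc]
        exact mul_le_mul_of_nonneg_left (hdiam.trans (le_max_right _ _)) hJ.sep_pos.le
    _ ≤ dist x y := hJ.separated σ j₁ j₂ h₁ h₂ hne x hx y hy

/-- A ball of radius `r` with `2 r < t κ c_σ` meets at most one child of `J σ`. -/
lemma exists_child_measure_inter_le [IsFiniteMeasure μ] (hJ : IsMarkovCylinderSystem P c t J μ)
    {κ : ℝ} (hκ : ∀ i j, 0 < P i j → κ ≤ c i j) (hσ : adm P σ) (y : X) {r : ℝ}
    (hr : 2 * r < t * κ * pword c σ) :
    ∃ j, adm P (σ ++ [j]) ∧ μ (closedBall y r ∩ J σ) ≤ μ (closedBall y r ∩ J (σ ++ [j])) := by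
  by_cases hmeet : ∃ j ∈ children P σ, (closedBall y r ∩ J (σ ++ [j])).Nonempty
  · obtain ⟨j₀, hj₀, z, hzB, hzJ⟩ := hmeet
    refine ⟨j₀, mem_children.mp hj₀, (hJ.measure_inter_le_sum_children hσ _).trans_eq ?_⟩
    refine Finset.sum_eq_single_of_mem j₀ hj₀ fun j hj hne => ?_
    suffices closedBall y r ∩ J (σ ++ [j]) = ∅ by rw [this, measure_empty]
    refine Set.eq_empty_of_forall_notMem fun x ⟨hxB, hxJ⟩ => ?_
    have hsep := hJ.le_dist_of_mem_children hκ hσ (mem_children.mp hj) (mem_children.mp hj₀)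
      hne hxJ hzJ
    linarith [dist_triangle_right x z y, mem_closedBall.mp hxB, mem_closedBall.mp hzB]
  · push Not at hmeet
    obtain ⟨j, hj⟩ : (children P σ).Nonempty := Finset.nonempty_of_sum_ne_zero <|
      (sum_children hJ.nonneg hJ.sum_row hσ).trans_ne one_ne_zero
    refine ⟨j, mem_children.mp hj, (hJ.measure_inter_le_sum_children hσ _).trans ?_⟩
    rw [Finset.sum_eq_zero fun i hi => by rw [hmeet i hi, measure_empty]]
    exact zero_le

lemma measure_closedBall_inter_le_of_le (hJ : IsMarkovCylinderSystem P c t J μ) {κ s : ℝ}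
    (hκ0 : 0 < κ) (hs : 0 ≤ s) (hσ : adm P σ) (y : X) {r : ℝ}
    (hσr : t * κ * pword c σ ≤ 2 * r) :
    μ (closedBall y r ∩ J σ) ≤ μ (J σ) * ENNReal.ofReal ((2 * r / (t * κ * pword c σ)) ^ s) := by
  have hone : 1 ≤ (2 * r / (t * κ * pword c σ)) ^ s := Real.one_le_rpow
    ((one_le_div (by have := hJ.sep_pos; have := pword_pos hJ.ratio_pos hσ; positivity)).mpr
      hσr) hs
  calc μ (closedBall y r ∩ J σ) ≤ μ (J σ) := measure_mono Set.inter_subset_right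
    _ ≤ _ := le_mul_of_one_le_right zero_le (ENNReal.one_le_ofReal.mpr hone)

lemma measure_closedBall_inter_le_of_pow_le [IsFiniteMeasure μ]
    (hJ : IsMarkovCylinderSystem P c t J μ) {κ ρ s : ℝ} (hκ0 : 0 < κ)
    (hκ : ∀ i j, 0 < P i j → κ ≤ c i j) (hρ : ∀ i j, 0 < P i j → c i j ≤ ρ) (hs : 0 ≤ s)
    (hPc : ∀ i j, 0 < P i j → P i j ≤ c i j ^ s) (y : X) {r : ℝ} (hr : 0 ≤ r) (k : ℕ) :
    ∀ σ, adm P σ → pword c σ * ρ ^ k ≤ 2 * r / (t * κ) →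
      μ (closedBall y r ∩ J σ) ≤
        μ (J σ) * ENNReal.ofReal ((2 * r / (t * κ * pword c σ)) ^ s) := by
  have htκ : 0 < t * κ := mul_pos hJ.sep_pos hκ0
  induction k with
  | zero =>
    intro σ hσ hk
    rw [pow_zero, mul_one, le_div_iff₀ htκ, mul_comm] at hk
    exact hJ.measure_closedBall_inter_le_of_le hκ0 hs hσ y hk
  | succ k ih =>
    intro σ hσ hk
    by_cases hσr : t * κ * pword c σ ≤ 2 * r
    · exact hJ.measure_closedBall_inter_le_of_le hκ0 hs hσ y hσr
    obtain ⟨j, hσj, hchild⟩ := hJ.exists_child_measure_inter_le hκ hσ y (not_le.mp hσr)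
    have hPj : 0 < P (σ.getLast hσ.1) j := ((adm_append_singleton_iff P hσ.1 j).mp hσj).2
    have hcj : 0 < c (σ.getLast hσ.1) j := hJ.ratio_pos _ _ hPj
    have hk' : pword c (σ ++ [j]) * ρ ^ k ≤ 2 * r / (t * κ) := by
      refine le_trans ?_ hk
      rw [pword_append_singleton c hσ.1, pow_succ', mul_assoc]
      have hρk : 0 ≤ ρ ^ k := pow_nonneg (hcj.le.trans (hρ _ _ hPj)) k
      exact mul_le_mul_of_nonneg_left (mul_le_mul_of_nonneg_right (hρ _ _ hPj) hρk)
        (pword_pos hJ.ratio_pos hσ).le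
    refine hchild.trans ((ih _ hσj hk').trans ?_)
    rw [hJ.measure_append σ hσ.1 j hσj, mul_comm (ENNReal.ofReal _), mul_assoc,
      ← ENNReal.ofReal_mul (hJ.nonneg _ _), pword_append_singleton c hσ.1, ← mul_assoc,
      ← div_div]
    gcongr
    exact mul_div_rpow_le hcj
      (div_nonneg (by linarith) (mul_pos htκ (pword_pos hJ.ratio_pos hσ)).le) (hPc _ _ hPj)

lemma measure_closedBall_inter_le [IsFiniteMeasure μ] (hJ : IsMarkovCylinderSystem P c t J μ)
    {κ ρ s : ℝ} (hκ0 : 0 < κ) (hκ : ∀ i j, 0 < P i j → κ ≤ c i j)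
    (hρ : ∀ i j, 0 < P i j → c i j ≤ ρ) (hρ1 : ρ < 1) (hs : 0 ≤ s)
    (hPc : ∀ i j, 0 < P i j → P i j ≤ c i j ^ s) (hσ : adm P σ) (y : X) {r : ℝ} (hr : 0 < r) :
    μ (closedBall y r ∩ J σ) ≤ μ (J σ) * ENNReal.ofReal ((2 * r / (t * κ * pword c σ)) ^ s) := by
  have hcσ : 0 < pword c σ := pword_pos hJ.ratio_pos hσ
  obtain ⟨k, hk⟩ := exists_pow_lt_of_lt_one
    (show 0 < 2 * r / (t * κ) / pword c σ by have := hJ.sep_pos; positivity) hρ1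
  refine hJ.measure_closedBall_inter_le_of_pow_le hκ0 hκ hρ hs hPc y hr.le k σ hσ ?_
  rw [mul_comm, ← le_div_iff₀ hcσ]
  exact hk.le

lemma smul_comap_closedBall_le [OpensMeasurableSpace X] [IsFiniteMeasure μ]
    (hJ : IsMarkovCylinderSystem P c t J μ) {κ ρ s : ℝ} (hκ0 : 0 < κ)
    (hκ : ∀ i j, 0 < P i j → κ ≤ c i j) (hρ : ∀ i j, 0 < P i j → c i j ≤ ρ) (hρ1 : ρ < 1)
    (hs : 0 ≤ s) (hPc : ∀ i j, 0 < P i j → P i j ≤ c i j ^ s) (hσ : adm P σ) {f : X → X}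
    (hf : ∀ x y, dist (f x) (f y) = pword c σ * dist x y) (x : X) {ε : ℝ} (hε : 0 < ε) :
    ((μ (J σ))⁻¹ • Measure.comap f (μ.restrict (J σ))) (closedBall x ε) ≤
      ENNReal.ofReal ((2 / (t * κ) * ε) ^ s) := by
  have hcσ : 0 < pword c σ := pword_pos hJ.ratio_pos hσ
  have hball := hJ.measure_closedBall_inter_le hκ0 hκ hρ hρ1 hs hPc hσ (f x) (mul_pos hcσ hε)
  rw [show 2 * (pword c σ * ε) / (t * κ * pword c σ) = 2 / (t * κ) * ε by
    field_simp] at hball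
  rw [Measure.smul_apply, smul_eq_mul]
  calc (μ (J σ))⁻¹ * Measure.comap f (μ.restrict (J σ)) (closedBall x ε)
      ≤ (μ (J σ))⁻¹ * μ (closedBall (f x) (pword c σ * ε) ∩ J σ) := by
        rw [← Measure.restrict_apply measurableSet_closedBall]
        exact mul_le_mul_right (comap_closedBall_le hcσ.le hf _ x ε) _
    _ ≤ (μ (J σ))⁻¹ * (μ (J σ) * ENNReal.ofReal ((2 / (t * κ) * ε) ^ s)) := by gcongr
    _ ≤ ENNReal.ofReal ((2 / (t * κ) * ε) ^ s) :=
        ENNReal.inv_mul_mul_le_of_ne_top (measure_ne_top μ _) _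

end IsMarkovCylinderSystem

section Extremes

variable {N : ℕ}

def valuesOnSupport (P g : Matrix (Fin N) (Fin N) ℝ) : Set ℝ :=
  {x | ∃ i j, 0 < P i j ∧ g i j = x}

lemma valuesOnSupport_finite (P g : Matrix (Fin N) (Fin N) ℝ) : (valuesOnSupport P g).Finite :=
  (Set.finite_range fun ij : Fin N × Fin N => g ij.1 ij.2).subset <| by
    rintro _ ⟨i, j, -, rfl⟩
    exact ⟨(i, j), rfl⟩

lemma valuesOnSupport_nonempty {P : Matrix (Fin N) (Fin N) ℝ} (g : Matrix (Fin N) (Fin N) ℝ)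
    (h : ∃ i j, 0 < P i j) : (valuesOnSupport P g).Nonempty :=
  let ⟨i, j, hij⟩ := h
  ⟨g i j, i, j, hij, rfl⟩

lemma le_sSup_valuesOnSupport {P : Matrix (Fin N) (Fin N) ℝ} (g : Matrix (Fin N) (Fin N) ℝ)
    {i j : Fin N} (h : 0 < P i j) : g i j ≤ sSup (valuesOnSupport P g) :=
  le_csSup (valuesOnSupport_finite P g).bddAbove ⟨i, j, h, rfl⟩

lemma sInf_valuesOnSupport_le {P : Matrix (Fin N) (Fin N) ℝ} (g : Matrix (Fin N) (Fin N) ℝ)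
    {i j : Fin N} (h : 0 < P i j) : sInf (valuesOnSupport P g) ≤ g i j :=
  csInf_le (valuesOnSupport_finite P g).bddBelow ⟨i, j, h, rfl⟩

lemma sSup_valuesOnSupport_mem {P g : Matrix (Fin N) (Fin N) ℝ} {S : Set ℝ}
    (h : ∃ i j, 0 < P i j) (hg : ∀ i j, 0 < P i j → g i j ∈ S) :
    sSup (valuesOnSupport P g) ∈ S := by
  obtain ⟨i, j, hij, hsup⟩ :=
    (valuesOnSupport_nonempty g h).csSup_mem (valuesOnSupport_finite P g)
  exact hsup ▸ hg i j hij

lemma sInf_valuesOnSupport_mem {P g : Matrix (Fin N) (Fin N) ℝ} {S : Set ℝ}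
    (h : ∃ i j, 0 < P i j) (hg : ∀ i j, 0 < P i j → g i j ∈ S) :
    sInf (valuesOnSupport P g) ∈ S := by
  obtain ⟨i, j, hij, hinf⟩ :=
    (valuesOnSupport_nonempty g h).csInf_mem (valuesOnSupport_finite P g)
  exact hinf ▸ hg i j hij

lemma exists_pos_of_sum_row [Nonempty (Fin N)] {P : Matrix (Fin N) (Fin N) ℝ}
    (hrow : ∀ i, ∑ j, P i j = 1) : ∃ i j, 0 < P i j := by
  obtain ⟨i⟩ := ‹Nonempty (Fin N)›
  obtain ⟨j, -, hj⟩ := Finset.exists_lt_of_sum_lt (f := fun _ => (0 : ℝ)) (g := P i)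
    (s := univ) (by simp [hrow i])
  exact ⟨i, j, hj⟩

end Extremes

lemma le_rpow_log_div_log {p p₀ c c₀ : ℝ} (hp : p ≤ p₀) (hp₀ : 0 < p₀) (hp₀1 : p₀ < 1)
    (hc₀ : 0 < c₀) (hc₀1 : c₀ < 1) (hc : c₀ ≤ c) : p ≤ c ^ (Real.log p₀ / Real.log c₀) :=
  calc p ≤ p₀ := hp
    _ = c₀ ^ Real.logb c₀ p₀ := (Real.rpow_logb hc₀ hc₀1.ne hp₀).symm
    _ ≤ c ^ (Real.log p₀ / Real.log c₀) := Real.rpow_le_rpow hc₀.le hc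
        (div_nonneg_of_nonpos (Real.log_neg hp₀ hp₀1).le (Real.log_neg hc₀ hc₀1).le)

theorem stmt17_general {E : Type*} [NormedAddCommGroup E]
    [MeasurableSpace E] [BorelSpace E]
    {N : ℕ} (P c : Matrix (Fin N) (Fin N) ℝ)
    (hnn : ∀ i j, 0 ≤ P i j) (hrow : ∀ i, ∑ j, P i j = 1)
    (hPlt1 : ∀ i j, 0 < P i j → P i j < 1)
    (hc : ∀ i j, 0 < P i j → 0 < c i j ∧ c i j < 1)
    (q : Fin N → ℝ) (hq1 : ∑ i, q i = 1)
    (t : ℝ) (ht : 0 < t ∧ t < 1)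
    (J : List (Fin N) → Set E) (f : List (Fin N) → E → E)
    (μ : Measure E) [IsProbabilityMeasure μ]
    -- cylinders are nonempty compact sets with the prescribed diameters
    (hJcpt : ∀ σ, adm P σ → IsCompact (J σ) ∧ (J σ).Nonempty)
    (hdiam : ∀ σ, adm P σ → Metric.diam (J σ) = pword c σ)
    -- nesting of cylinders
    (hnest : ∀ σ (i : Fin N), adm P σ → adm P (σ ++ [i]) → J (σ ++ [i]) ⊆ J σ)
    -- strong separation of sibling cylinders
    (hsep : ∀ σ (j1 j2 : Fin N), adm P (σ ++ [j1]) → adm P (σ ++ [j2]) → j1 ≠ j2 →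
      ∀ x ∈ J (σ ++ [j1]), ∀ y ∈ J (σ ++ [j2]),
        t * max (Metric.diam (J (σ ++ [j1]))) (Metric.diam (J (σ ++ [j2]))) ≤ dist x y)
    -- f σ is a similitude of ratio c_σ
    (hf : ∀ σ, adm P σ → ∀ x y : E, dist (f σ x) (f σ y) = pword c σ * dist x y)
    -- μ is the Markov-type measure: μ(J_σ) = q_{σ_1} p_σ
    (hμ : ∀ σ, adm P σ → μ (J σ) = ENNReal.ofReal ((σ.map q).headI * pword P σ))
    (pmax cmin : ℝ)
    (hpmax : pmax = sSup {x : ℝ | ∃ i j, 0 < P i j ∧ P i j = x})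
    (hcmin : cmin = sInf {x : ℝ | ∃ i j, 0 < P i j ∧ c i j = x}) :
    ∃ A3 : ℝ, 0 < A3 ∧ 0 < Real.log pmax / Real.log cmin ∧
      ∀ σ, adm P σ → ∀ (x : E) (ε : ℝ), 0 < ε →
        ((((μ (J σ))⁻¹ • Measure.comap (f σ) (μ.restrict (J σ)))
            (Metric.closedBall x ε)).toReal ≤
          A3 * ε ^ (Real.log pmax / Real.log cmin)) := by
  have : Nonempty (Fin N) :=
    univ_nonempty_iff.mp (nonempty_of_sum_ne_zero (hq1.trans_ne one_ne_zero))
  have hsupp := exists_pos_of_sum_row hrow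
  have ht0 : 0 < t := ht.1
  obtain ⟨hp0, hp1⟩ : pmax ∈ Set.Ioo 0 1 :=
    hpmax ▸ sSup_valuesOnSupport_mem hsupp fun i j h => ⟨h, hPlt1 i j h⟩
  obtain ⟨hc0, hc1⟩ : cmin ∈ Set.Ioo 0 1 := hcmin ▸ sInf_valuesOnSupport_mem hsupp hc
  have hcmax : sSup (valuesOnSupport P c) < 1 :=
    (sSup_valuesOnSupport_mem (S := Set.Ioo 0 1) hsupp hc).2
  have hcmin_le : ∀ i j, 0 < P i j → cmin ≤ c i j := fun i j h =>
    hcmin ▸ sInf_valuesOnSupport_le c h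
  have hPc : ∀ i j, 0 < P i j → P i j ≤ c i j ^ (Real.log pmax / Real.log cmin) :=
    fun i j h => le_rpow_log_div_log (hpmax ▸ le_sSup_valuesOnSupport P h)
      hp0 hp1 hc0 hc1 (hcmin_le i j h)
  have hJ : IsMarkovCylinderSystem P c t J μ :=
    { nonneg := hnn, sum_row := hrow, ratio_pos := fun i j h => (hc i j h).1, sep_pos := ht0
      measurableSet := fun σ hσ => (hJcpt σ hσ).1.isClosed.measurableSet
      diam_eq := hdiam, subset := hnest, separated := hsep
      measure_append := fun _ hσ _ hσj => measure_append_singleton_eq q hnn hμ hσ hσj }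
  have hs : 0 < Real.log pmax / Real.log cmin :=
    div_pos_of_neg_of_neg (Real.log_neg hp0 hp1) (Real.log_neg hc0 hc1)
  refine ⟨(2 / (t * cmin)) ^ (Real.log pmax / Real.log cmin), by positivity, hs,
    fun σ hσ x ε hε => ?_⟩
  have hbound := hJ.smul_comap_closedBall_le hc0 hcmin_le
    (fun _ _ h => le_sSup_valuesOnSupport c h) hcmax hs.le hPc hσ (hf σ hσ) x hε
  rw [Real.mul_rpow (by positivity) hε.le] at hbound
  exact ENNReal.toReal_le_of_le_ofReal (by positivity) hbound

theorem stmt17 {E : Type*} [NormedAddCommGroup E] [NormedSpace ℝ E]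
    [MeasurableSpace E] [BorelSpace E]
    {N : ℕ} (P c : Matrix (Fin N) (Fin N) ℝ)
    (hnn : ∀ i j, 0 ≤ P i j) (hrow : ∀ i, ∑ j, P i j = 1)
    (hPlt1 : ∀ i j, 0 < P i j → P i j < 1)
    (hc : ∀ i j, 0 < P i j → 0 < c i j ∧ c i j < 1)
    (q : Fin N → ℝ) (hq : ∀ i, 0 < q i) (hq1 : ∑ i, q i = 1)
    (t δ : ℝ) (ht : 0 < t ∧ t < 1) (hδ : 0 < δ)
    (J : List (Fin N) → Set E) (f : List (Fin N) → E → E)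
    (μ : Measure E) [IsProbabilityMeasure μ]
    -- cylinders are nonempty compact sets with the prescribed diameters
    (hJcpt : ∀ σ, adm P σ → IsCompact (J σ) ∧ (J σ).Nonempty)
    (hdiam : ∀ σ, adm P σ → Metric.diam (J σ) = pword c σ)
    -- nesting of cylinders
    (hnest : ∀ σ (i : Fin N), adm P σ → adm P (σ ++ [i]) → J (σ ++ [i]) ⊆ J σ)
    -- strong separation of sibling cylinders
    (hsep : ∀ σ (j1 j2 : Fin N), adm P (σ ++ [j1]) → adm P (σ ++ [j2]) → j1 ≠ j2 →
      ∀ x ∈ J (σ ++ [j1]), ∀ y ∈ J (σ ++ [j2]),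
        t * max (Metric.diam (J (σ ++ [j1]))) (Metric.diam (J (σ ++ [j2]))) ≤ dist x y)
    -- each first-order cylinder contains a ball of radius δ (|J_i| = 1 normalized)
    (hball : ∀ i : Fin N, ∃ x, Metric.closedBall x δ ⊆ J [i])
    -- f σ is a similitude of ratio c_σ
    (hf : ∀ σ, adm P σ → ∀ x y : E, dist (f σ x) (f σ y) = pword c σ * dist x y)
    -- μ is the Markov-type measure: μ(J_σ) = q_{σ_1} p_σ
    (hμ : ∀ σ, adm P σ → μ (J σ) = ENNReal.ofReal ((σ.map q).headI * pword P σ))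
    (pmax cmin : ℝ)
    (hpmax : pmax = sSup {x : ℝ | ∃ i j, 0 < P i j ∧ P i j = x})
    (hcmin : cmin = sInf {x : ℝ | ∃ i j, 0 < P i j ∧ c i j = x}) :
    ∃ A3 : ℝ, 0 < A3 ∧ 0 < Real.log pmax / Real.log cmin ∧
      ∀ σ, adm P σ → ∀ (x : E) (ε : ℝ), 0 < ε →
        ((((μ (J σ))⁻¹ • Measure.comap (f σ) (μ.restrict (J σ)))
            (Metric.closedBall x ε)).toReal ≤
          A3 * ε ^ (Real.log pmax / Real.log cmin)) :=
  stmt17_general P c hnn hrow hPlt1 hc q hq1 t ht J f μ hJcpt hdiam hnest hsep hf hμ pmax cmin hpmax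
    hcmin
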